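/- arXiv:2505.14018 — 3 statements merged into one kernel-verified Lean document; each statement's English description precedes it below -/
import Mathlib

section
/- Let G be a 2-connected graph that is k-contractible to a cactus T, and fix a T-witness structure W of G. If f: V(G) → {1,2,3} is obtained by assigning each vertex a color independently and uniformly at random, then f is compatible with W with probability at least 1/3^{6k}. -/
open SimpleGraph

universe u v

/-- A cactus: a connected graph in which every edge lies on at most one cycle
(any two cycles through a common edge have the same edge set). -/
def IsCactus {V : Type u} (G : SimpleGraph V) : Prop :=
  G.Connected ∧ ∀ (e : Sym2 V) (a b : V) (c₁ : G.Walk a a) (c₂ : G.Walk b b),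
    c₁.IsCycle → c₂.IsCycle → e ∈ c₁.edges → e ∈ c₂.edges →
    {e' | e' ∈ c₁.edges} = {e' | e' ∈ c₂.edges}

/-- The graph `G/F` obtained by contracting the edges of `F`: its vertices are the
connected components of the subgraph spanned by the edges of `F` that lie in `G`. -/
def contract {V : Type u} (G : SimpleGraph V) (F : Set (Sym2 V)) :
    SimpleGraph (SimpleGraph.fromEdgeSet F ⊓ G).ConnectedComponent where
  Adj a b := a ≠ b ∧ ∃ x y : V, G.Adj x y ∧
      (SimpleGraph.fromEdgeSet F ⊓ G).connectedComponentMk x = a ∧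
      (SimpleGraph.fromEdgeSet F ⊓ G).connectedComponentMk y = b
  symm := by
    constructor
    rintro a b ⟨hne, x, y, hadj, hx, hy⟩
    exact ⟨hne.symm, y, x, hadj.symm, hy, hx⟩
  loopless := by
    constructor
    rintro a ⟨hne, -⟩
    exact hne rfl

/-- A cut-vertex of `G`: removing it disconnects the graph. -/
def IsCutVertex {V : Type u} (G : SimpleGraph V) (x : V) : Prop :=
  ¬ (G.induce ({x}ᶜ : Set V)).Connected

/-- 2-connected: connected, at least 3 vertices, no cut-vertex. -/
def TwoConnected {V : Type u} (G : SimpleGraph V) : Prop :=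
  G.Connected ∧ 3 ≤ Nat.card V ∧ ∀ x : V, (G.induce ({x}ᶜ : Set V)).Connected

/-- A cable path: a path whose internal vertices are adjacent exactly to their
two neighbours on the path. -/
def IsCablePath {V : Type u} (G : SimpleGraph V) (l : List V) : Prop :=
  l ≠ [] ∧ l.Nodup ∧ l.Chain' G.Adj ∧
  ∀ (i : ℕ) (h2 : i + 1 < l.length) (_h1 : 1 ≤ i) (y : V),
    G.Adj (l.get ⟨i, by omega⟩) y ↔
      (y = l.get ⟨i - 1, by omega⟩ ∨ y = l.get ⟨i + 1, h2⟩)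

/-- `G` is contractible to `H` via `ψ`: preimages are connected witness sets and
`H`-adjacency corresponds to existence of crossing edges of `G`. -/
def IsContraction {V : Type u} {W : Type v} (G : SimpleGraph V) (H : SimpleGraph W)
    (ψ : V → W) : Prop :=
  Function.Surjective ψ ∧
  (∀ t : W, (G.induce (ψ ⁻¹' {t})).Connected) ∧
  (∀ t t' : W, H.Adj t t' ↔ t ≠ t' ∧ ∃ x y : V, G.Adj x y ∧ ψ x = t ∧ ψ y = t')

/-- The witness set of `t` is big: it contains at least two vertices. -/
def BigWitness {V : Type u} {W : Type v} (ψ : V → W) (t : W) : Prop :=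
  ∃ a b : V, a ≠ b ∧ ψ a = t ∧ ψ b = t

/-- A 3-colouring `f` of `V(G)` is compatible with the `T`-witness structure given by `ψ`:
witness sets are monochromatic, adjacent big witness sets get distinct colours, and
endpoints of cable paths in `T` between two big witness sets through singleton witness
sets are coloured differently from their path-neighbours. -/
def Compatible {V : Type u} {W : Type v} (T : SimpleGraph W) (ψ : V → W)
    (f : V → Fin 3) : Prop :=
  (∀ x y : V, ψ x = ψ y → f x = f y) ∧
  (∀ t t' : W, BigWitness ψ t → BigWitness ψ t' → T.Adj t t' →
    ∀ x y : V, ψ x = t → ψ y = t' → f x ≠ f y) ∧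
  (∀ l : List W, IsCablePath T l → ∀ (hlen : 3 ≤ l.length),
    BigWitness ψ (l.get ⟨0, by omega⟩) →
    BigWitness ψ (l.get ⟨l.length - 1, by omega⟩) →
    (∀ (i : ℕ) (h : i < l.length), 1 ≤ i → i < l.length - 1 →
      ¬ BigWitness ψ (l.get ⟨i, h⟩)) →
    ((∀ x y : V, ψ x = l.get ⟨0, by omega⟩ → ψ y = l.get ⟨1, by omega⟩ → f x ≠ f y) ∧
     (∀ x y : V, ψ x = l.get ⟨l.length - 1, by omega⟩ →
        ψ y = l.get ⟨l.length - 2, by omega⟩ → f x ≠ f y)))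

/-- The graph `G - Z`, seen as a graph on all of `V`: edges of `G` avoiding `Z`. -/
def restrictOutside {V : Type u} (G : SimpleGraph V) (Z : Set V) : SimpleGraph V where
  Adj x y := G.Adj x y ∧ x ∉ Z ∧ y ∉ Z
  symm := by constructor; rintro x y ⟨h, hx, hy⟩; exact ⟨h.symm, hy, hx⟩
  loopless := by constructor; rintro x ⟨h, -, -⟩; exact G.irrefl h

/-- `Z` is a core of `G`: every connected component of `G - Z` is an isolated vertex
or (the vertex set of) a cable path of `G`. -/
def IsCore {V : Type u} (G : SimpleGraph V) (Z : Set V) : Prop :=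
  ∀ x ∉ Z, {u | (restrictOutside G Z).Reachable x u} = {x} ∨
    ∃ l : List V, IsCablePath G l ∧
      {u | (restrictOutside G Z).Reachable x u} = {u | u ∈ l}

/-- A connected core. -/
def IsConnectedCore {V : Type u} (G : SimpleGraph V) (Z : Set V) : Prop :=
  (G.induce Z).Connected ∧ IsCore G Z

/-- `B` induces a nonempty connected subgraph without cut-vertices. -/
def NoCutVertexSet {V : Type u} (G : SimpleGraph V) (B : Set V) : Prop :=
  B.Nonempty ∧ (G.induce B).Connected ∧
  ∀ x ∈ B, (B \ {x}).Nonempty → (G.induce (B \ {x})).Connected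

/-- A block of `G`: a maximal set inducing a connected subgraph without cut-vertices. -/
def IsBlock {V : Type u} (G : SimpleGraph V) (B : Set V) : Prop :=
  NoCutVertexSet G B ∧ ∀ B' : Set V, B ⊆ B' → NoCutVertexSet G B' → B = B'

/-- `B` is the vertex set of an induced cycle of `G`. -/
def IsCycleSet {V : Type u} (G : SimpleGraph V) (B : Set V) : Prop :=
  ∃ (a : V) (c : G.Walk a a), c.IsCycle ∧ {x | x ∈ c.support} = B ∧
    ∀ x ∈ B, ∀ y ∈ B, G.Adj x y → s(x, y) ∈ c.edges

/-- `G` can be turned into a cactus by contracting at most `k` edges. -/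
def KContractibleToCactus {V : Type u} (G : SimpleGraph V) (k : ℕ) : Prop :=
  ∃ F : Set (Sym2 V), F ⊆ G.edgeSet ∧ F.ncard ≤ k ∧ IsCactus (contract G F)

/-- `G` has a tree decomposition of width at most `w`. -/
def HasTreewidthAtMost {V : Type u} (G : SimpleGraph V) (w : ℕ) : Prop :=
  ∃ (ι : Type u) (T : SimpleGraph ι) (β : ι → Set V),
    T.Connected ∧ T.IsAcyclic ∧
    (∀ x : V, ∃ i, x ∈ β i) ∧
    (∀ ⦃x y : V⦄, G.Adj x y → ∃ i, x ∈ β i ∧ y ∈ β i) ∧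
    (∀ (x : V) (i j : ι), x ∈ β i → x ∈ β j →
      ∀ p : T.Walk i j, p.IsPath → ∀ z ∈ p.support, x ∈ β z) ∧
    (∀ i, (β i).ncard ≤ w + 1)

/-!
Let `B` be the set of vertices of `T` with big witness sets. Summing the sizes of the witness
sets gives `|V(T)| + |B| ≤ |V(G)|`, so `|B| ≤ k`, and all but at most `k` vertices of `G` are
chosen representatives of their witness sets. A colouring of `T` pulled back along `ψ` is
compatible as soon as it colours `T[B]` properly and changes colour on the first and last edge of
every cable path joining two vertices of `B` through singletons (a linking cable).

Both conditions involve few vertices, by the cycle rank bound `|E| + #components ≤ |V| + #cycles`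
together with the edge-disjointness of the cycles of a cactus. Every subgraph of a cactus has a
vertex of degree at most two, so `T[B]` can be 3-coloured greedily. In the union of the linking
cables, inner vertices have degree two, no edge lies inside `B` and every cycle passes through
two vertices of `B`, hence through four edges at `B`; the rank bound then shows that at most
`4 |B|` vertices are adjacent to `B` along linking cables. Recolouring any colouring on the
non-representatives and on the representatives of `B` and of these neighbours, at most `6 k`
vertices, makes it compatible, so each compatible colouring arises from at most `3 ^ (6 k)`
colourings.
-/

lemma Finset.mul_ncard_le_card_of_pairwiseDisjoint {α : Type*} [Fintype α] [DecidableEq α]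
    {S : Set (Finset α)} (hS : S.PairwiseDisjoint id) (A : Finset α) {m : ℕ}
    (hm : ∀ F ∈ S, m ≤ (F ∩ A).card) : m * S.ncard ≤ A.card := by
  classical
  rw [Set.ncard_eq_toFinset_card' S]
  calc m * S.toFinset.card = ∑ _F ∈ S.toFinset, m := by rw [sum_const, smul_eq_mul, mul_comm]
    _ ≤ ∑ F ∈ S.toFinset, (F ∩ A).card := sum_le_sum fun F hF => hm F (Set.mem_toFinset.mp hF)
    _ = (S.toFinset.biUnion (· ∩ A)).card := by
      refine (card_biUnion fun F hF G hG hne => ?_).symm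
      exact (hS (Set.mem_toFinset.mp hF) (Set.mem_toFinset.mp hG) hne).mono
        inter_subset_left inter_subset_left
    _ ≤ A.card := card_le_card (biUnion_subset.mpr fun _ _ => inter_subset_right)

lemma Fin.exists_forall_ne_of_card_le_two {α : Type*} {s : Finset α} (hs : s.card ≤ 2)
    (κ : α → Fin 3) : ∃ c, ∀ y ∈ s, κ y ≠ c := by
  classical
  obtain ⟨c, -, hc⟩ := Finset.exists_mem_notMem_of_card_lt_card
    (s := s.image κ) (t := Finset.univ) (by simpa using Finset.card_image_le.trans_lt (by omega))
  exact ⟨c, fun y hy hyc => hc (hyc ▸ Finset.mem_image_of_mem κ hy)⟩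

lemma List.forall_getElem_mem_of_interior {α : Type*} {l : List α} {S : Set α}
    (hS : ∀ (i : ℕ) (h1 : 1 ≤ i) (h2 : i + 1 < l.length),
      l[i] ∈ S → l[i - 1] ∈ S ∧ l[i + 1] ∈ S)
    {i : ℕ} (h1 : 1 ≤ i) (h2 : i + 1 < l.length) (hi : l[i] ∈ S) :
    ∀ (j : ℕ) (hj : j < l.length), l[j] ∈ S := by
  have up : ∀ d (hd : i + d < l.length), l[i + d] ∈ S := by
    intro d
    induction d with
    | zero => exact fun _ => hi
    | succ d ih => exact fun hd => (hS (i + d) (by omega) hd (ih (by omega))).2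
  have down : ∀ d (hd : d ≤ i), l[i - d] ∈ S := by
    intro d
    induction d with
    | zero => exact fun _ => hi
    | succ d ih =>
      intro hd
      have := (hS (i - d) (by omega) (by omega) (ih (by omega))).1
      simpa [show i - d - 1 = i - (d + 1) by omega] using this
  intro j hj
  rcases le_or_gt i j with hij | hij
  · simpa [show i + (j - i) = j by omega] using up (j - i) (by omega)
  · simpa [show i - (i - j) = j by omega] using down (i - j) (by omega)

lemma card_fun_le_pow_card_mul_ncard {V C : Type*} [Fintype V] [DecidableEq V] [Fintype C]
    {P : (V → C) → Prop} (S : Finset V) (h : ∀ g : V → C, ∃ f, P f ∧ ∀ v ∉ S, f v = g v) :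
    Fintype.card (V → C) ≤ Fintype.card C ^ S.card * {f | P f}.ncard := by
  choose F hF hFS using h
  have hinj : Function.Injective
      fun g : V → C => ((fun v : S => g v), (⟨F g, hF g⟩ : {f | P f})) := by
    intro g₁ g₂ h12
    simp only [Prod.mk.injEq, Subtype.mk.injEq] at h12
    funext v
    by_cases hv : v ∈ S
    · exact congrFun h12.1 ⟨v, hv⟩
    · rw [← hFS g₁ v hv, ← hFS g₂ v hv, h12.2]
  have := Nat.card_le_card_of_injective _ hinj
  rw [Nat.card_prod, Nat.card_coe_set_eq] at this
  simpa [Nat.card_eq_fintype_card] using this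

lemma card_sdiff_image_union_image_le {V W : Type*} [Fintype V] [Fintype W] [DecidableEq V]
    {r : W → V} {ψ : V → W} (hr : Function.LeftInverse ψ r) (A : Finset W) :
    ((Finset.univ \ Finset.univ.image r) ∪ A.image r).card ≤
      Fintype.card V - Fintype.card W + A.card := by
  refine (Finset.card_union_le _ _).trans (add_le_add (le_of_eq ?_) Finset.card_image_le)
  rw [Finset.card_sdiff_of_subset (Finset.subset_univ _), Finset.card_univ,
    Finset.card_image_of_injective _ hr.injective, Finset.card_univ]

namespace SimpleGraph

variable {Ω : Type*} {X Y : SimpleGraph Ω}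

section CycleEdgeSets

variable [DecidableEq Ω]

def cycleEdgeSets (X : SimpleGraph Ω) : Set (Finset (Sym2 Ω)) :=
  {F | ∃ (a : Ω) (c : X.Walk a a), c.IsCycle ∧ c.edges.toFinset = F}

lemma cycleEdgeSets_mono (h : X ≤ Y) : X.cycleEdgeSets ⊆ Y.cycleEdgeSets := by
  rintro _ ⟨a, c, hc, rfl⟩
  exact ⟨a, c.mapLe h, hc.mapLe h, by rw [Walk.edges_mapLe_eq_edges]⟩

lemma three_le_card_of_mem_cycleEdgeSets {F : Finset (Sym2 Ω)} (hF : F ∈ X.cycleEdgeSets) :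
    3 ≤ F.card := by
  obtain ⟨a, c, hc, rfl⟩ := hF
  rw [List.toFinset_card_of_nodup hc.isTrail.edges_nodup, Walk.length_edges]
  exact hc.three_le_length

lemma subset_edgeSet_of_mem_cycleEdgeSets {F : Finset (Sym2 Ω)} (hF : F ∈ X.cycleEdgeSets) :
    ↑F ⊆ X.edgeSet := by
  obtain ⟨a, c, hc, rfl⟩ := hF
  exact fun e he => c.edges_subset_edgeSet (List.mem_toFinset.mp he)

lemma cycleEdgeSets_deleteEdges_subset {u v a : Ω} {c : X.Walk a a} (he : s(u, v) ∈ c.edges) :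
    (X.deleteEdges {s(u, v)}).cycleEdgeSets ⊆ X.cycleEdgeSets \ {c.edges.toFinset} := by
  refine fun F hF => ⟨cycleEdgeSets_mono (deleteEdges_le _) hF, ?_⟩
  rintro rfl
  have := subset_edgeSet_of_mem_cycleEdgeSets hF (List.mem_toFinset.mpr he)
  simp [edgeSet_deleteEdges] at this

lemma Walk.IsCycle.two_le_card_filter_mem_edges {a b : Ω} {c : X.Walk a a} (hc : c.IsCycle)
    (hb : b ∈ c.support) : 2 ≤ (c.edges.toFinset.filter (b ∈ ·)).card := by
  obtain ⟨x, y, hxy, hN⟩ := Set.ncard_eq_two.mp (hc.ncard_neighborSet_toSubgraph_eq_two hb)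
  have hmem : ∀ z ∈ c.toSubgraph.neighborSet b, s(b, z) ∈ c.edges.toFinset.filter (b ∈ ·) :=
    fun z hz => by simpa using Walk.adj_toSubgraph_iff_mem_edges.mp hz
  calc 2 = ({s(b, x), s(b, y)} : Finset (Sym2 Ω)).card := by
        rw [Finset.card_pair (Sym2.congr_right.not.mpr hxy)]
    _ ≤ _ := Finset.card_le_card <| Finset.insert_subset_iff.mpr
        ⟨hmem x (by simp [hN]), Finset.singleton_subset_iff.mpr (hmem y (by simp [hN]))⟩

end CycleEdgeSets

section RankBound

lemma card_connectedComponent_le_of_le [Finite Ω] (h : X ≤ Y) :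
    Nat.card Y.ConnectedComponent ≤ Nat.card X.ConnectedComponent :=
  Nat.card_le_card_of_surjective _ (ConnectedComponent.surjective_map_ofLE h)

lemma card_connectedComponent_lt_deleteEdges [Finite Ω] {u v : Ω} (huv : X.Adj u v)
    (hreach : ¬ (X.deleteEdges {s(u, v)}).Reachable u v) :
    Nat.card X.ConnectedComponent < Nat.card (X.deleteEdges {s(u, v)}).ConnectedComponent := by
  have := Fintype.ofFinite (X.deleteEdges {s(u, v)}).ConnectedComponent
  have := Fintype.ofFinite X.ConnectedComponent
  rw [Nat.card_eq_fintype_card, Nat.card_eq_fintype_card]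
  refine Fintype.card_lt_of_surjective_not_injective _
    (ConnectedComponent.surjective_map_ofLE (deleteEdges_le _)) fun hinj => hreach ?_
  exact ConnectedComponent.exact (hinj (ConnectedComponent.sound huv.reachable))

theorem ncard_edgeSet_add_card_connectedComponent_le [Fintype Ω] [DecidableEq Ω]
    (X : SimpleGraph Ω) :
    X.edgeSet.ncard + Nat.card X.ConnectedComponent ≤ Fintype.card Ω + X.cycleEdgeSets.ncard := by
  induction hn : X.edgeSet.ncard generalizing X with
  | zero =>
    have := Nat.card_le_card_of_surjective _ fun C : X.ConnectedComponent => C.exists_rep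
    rw [Nat.card_eq_fintype_card (α := Ω)] at this
    omega
  | succ n ih =>
    obtain ⟨e, he⟩ := Set.nonempty_of_ncard_ne_zero (s := X.edgeSet) (by omega)
    cases e with | h u v => ?_
    have hX' := deleteEdges_le (G := X) {s(u, v)}
    have hn' : (X.deleteEdges {s(u, v)}).edgeSet.ncard = n := by
      rw [edgeSet_deleteEdges, Set.ncard_sdiff_singleton_of_mem he]; omega
    have := ih _ hn'
    by_cases hreach : (X.deleteEdges {s(u, v)}).Reachable u v
    · obtain ⟨a, c, hc, hec⟩ := adj_and_reachable_delete_edges_iff_exists_cycle.mp ⟨he, hreach⟩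
      have := (Set.ncard_le_ncard (cycleEdgeSets_deleteEdges_subset (u := u) (v := v) hec)).trans_lt
        (Set.ncard_sdiff_singleton_lt_of_mem ⟨a, c, hc, rfl⟩)
      have := card_connectedComponent_le_of_le hX'
      omega
    · have := card_connectedComponent_lt_deleteEdges (u := u) (v := v) he hreach
      have := Set.ncard_le_ncard (cycleEdgeSets_mono hX')
      omega

lemma eq_of_reachable_of_forall_not_adj {x z : Ω} (hx : ∀ y, ¬ X.Adj x y) (h : X.Reachable x z) :
    x = z := by
  obtain ⟨p⟩ := h
  cases p with
  | nil => rfl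
  | cons hadj _ => exact absurd hadj (hx _)

lemma card_le_card_connectedComponent [Finite Ω] (I : Finset Ω)
    (hI : ∀ x ∈ I, ∀ y ∈ I, X.Reachable x y → x = y) :
    I.card ≤ Nat.card X.ConnectedComponent := by
  rw [← Nat.card_eq_finsetCard]
  refine Nat.card_le_card_of_injective (fun x : I => X.connectedComponentMk x) fun x y hxy => ?_
  exact Subtype.ext (hI x x.2 y y.2 (ConnectedComponent.exact hxy))

lemma ncard_edgeSet_lt_of_forall_not_adj [Fintype Ω] [DecidableEq Ω] {A : Finset Ω}
    (hA : A.Nonempty) (hiso : ∀ x ∉ A, ∀ y, ¬ X.Adj x y) :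
    X.edgeSet.ncard < A.card + X.cycleEdgeSets.ncard := by
  obtain ⟨a, ha⟩ := hA
  have hcomp := card_le_card_connectedComponent (X := X) (insert a Aᶜ) <| by
    have key : ∀ x ∈ insert a Aᶜ, ∀ y ∈ insert a Aᶜ, x ∉ A → X.Reachable x y → x = y :=
      fun x _ y _ hx => eq_of_reachable_of_forall_not_adj (hiso x hx)
    intro x hx y hy hxy
    by_cases hxA : x ∈ A
    · by_cases hyA : y ∈ A
      · simp_all
      · exact (key y hy x hx hyA hxy.symm).symm
    · exact key x hx y hy hxA hxy
  rw [Finset.card_insert_of_notMem (by simpa using ha), Finset.card_compl] at hcomp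
  have := X.ncard_edgeSet_add_card_connectedComponent_le
  have := A.card_le_univ
  omega

end RankBound

section EdgeDisjointCycles

variable [Fintype Ω] [DecidableEq Ω]

lemma exists_card_filter_adj_le_two [DecidableRel X.Adj] (hX : X.cycleEdgeSets.PairwiseDisjoint id)
    {A : Finset Ω} (hA : A.Nonempty) : ∃ w ∈ A, (A.filter (X.Adj w)).card ≤ 2 := by
  by_contra! hdeg
  classical
  set Y := restrictOutside X (↑A)ᶜ
  have hYA : ∀ x y, Y.Adj x y ↔ X.Adj x y ∧ x ∈ A ∧ y ∈ A := by simp [Y, restrictOutside]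
  have hrank := ncard_edgeSet_lt_of_forall_not_adj hA fun x hx y h => hx ((hYA x y).mp h).2.1
  rw [← coe_edgeFinset, Set.ncard_coe_finset] at hrank
  have hcyc : 3 * Y.cycleEdgeSets.ncard ≤ Y.edgeFinset.card := by
    refine Finset.mul_ncard_le_card_of_pairwiseDisjoint
      (hX.subset (cycleEdgeSets_mono fun x y h => ((hYA x y).mp h).1)) _ fun F hF => ?_
    rw [Finset.inter_eq_left.mpr fun e he =>
      mem_edgeFinset.mpr (subset_edgeSet_of_mem_cycleEdgeSets hF he)]
    exact three_le_card_of_mem_cycleEdgeSets hF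
  have hsum : 3 * A.card ≤ 2 * Y.edgeFinset.card := by
    rw [← sum_degrees_eq_twice_card_edges]
    calc 3 * A.card = ∑ _w ∈ A, 3 := by rw [Finset.sum_const, smul_eq_mul, mul_comm]
      _ ≤ ∑ w ∈ A, Y.degree w := Finset.sum_le_sum fun w hw => by
          have hN : Y.neighborFinset w = A.filter (X.Adj w) := by
            ext y; simp [hYA, hw, and_comm]
          rw [← card_neighborFinset_eq_degree, hN]
          exact hdeg w hw
      _ ≤ ∑ w, Y.degree w := Finset.sum_le_sum_of_subset (Finset.subset_univ A)
  omega

theorem exists_fin_three_coloring_of_pairwiseDisjoint_cycleEdgeSets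
    (hX : X.cycleEdgeSets.PairwiseDisjoint id) (A : Finset Ω) :
    ∃ κ : Ω → Fin 3, ∀ t ∈ A, ∀ t' ∈ A, X.Adj t t' → κ t ≠ κ t' := by
  classical
  induction A using Finset.strongInduction with
  | H A ih =>
  rcases A.eq_empty_or_nonempty with rfl | hA
  · exact ⟨fun _ => 0, by simp⟩
  obtain ⟨w, hwA, hw⟩ := exists_card_filter_adj_le_two hX hA
  obtain ⟨κ, hκ⟩ := ih (A.erase w) (Finset.erase_ssubset hwA)
  obtain ⟨c, hc⟩ := Fin.exists_forall_ne_of_card_le_two hw κ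
  refine ⟨Function.update κ w c, fun t ht t' ht' hadj => ?_⟩
  rcases eq_or_ne t w with rfl | htw <;> rcases eq_or_ne t' t with rfl | ht't
  · exact absurd hadj X.irrefl
  · rw [Function.update_self, Function.update_of_ne ht't]
    exact (hc t' (by simp [ht', hadj])).symm
  · exact absurd hadj X.irrefl
  rcases eq_or_ne t' w with rfl | ht'w
  · rw [Function.update_self, Function.update_of_ne htw]
    exact hc t (by simp [ht, hadj.symm])
  · rw [Function.update_of_ne htw, Function.update_of_ne ht'w]
    exact hκ t (by simp [ht, htw]) t' (by simp [ht', ht'w]) hadj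

variable [DecidableRel X.Adj] {B : Finset Ω}

lemma four_mul_ncard_cycleEdgeSets_le_sum_degree (hB : ∀ x y, X.Adj x y → x ∈ B → y ∉ B)
    (hX : X.cycleEdgeSets.PairwiseDisjoint id)
    (hcyc : ∀ (a : Ω) (c : X.Walk a a), c.IsCycle →
      ∃ b₁ ∈ B, ∃ b₂ ∈ B, b₁ ≠ b₂ ∧ b₁ ∈ c.support ∧ b₂ ∈ c.support) :
    4 * X.cycleEdgeSets.ncard ≤ ∑ b ∈ B, X.degree b := by
  calc 4 * X.cycleEdgeSets.ncard ≤ (B.biUnion fun b => X.incidenceFinset b).card := by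
        refine Finset.mul_ncard_le_card_of_pairwiseDisjoint hX _ fun F hF => ?_
        have hFX := subset_edgeSet_of_mem_cycleEdgeSets hF
        obtain ⟨a, c, hc, rfl⟩ := hF
        obtain ⟨b₁, hb₁, b₂, hb₂, hne, h₁, h₂⟩ := hcyc a c hc
        have hsub : ∀ b ∈ B, c.edges.toFinset.filter (b ∈ ·) ⊆
            c.edges.toFinset ∩ B.biUnion fun b => X.incidenceFinset b := fun b hb e he => by
          rw [Finset.mem_filter] at he
          exact Finset.mem_inter.mpr ⟨he.1, Finset.mem_biUnion.mpr
            ⟨b, hb, (mem_incidenceFinset _ _ _).mpr ⟨hFX he.1, he.2⟩⟩⟩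
        have hdisj : Disjoint (c.edges.toFinset.filter (b₁ ∈ ·))
            (c.edges.toFinset.filter (b₂ ∈ ·)) := by
          refine Finset.disjoint_filter.mpr fun e he hb₁e hb₂e => ?_
          rw [(Sym2.mem_and_mem_iff hne).mp ⟨hb₁e, hb₂e⟩] at he
          exact hB _ _ (hFX he) hb₁ hb₂
        calc 4 = 2 + 2 := rfl
          _ ≤ _ := add_le_add (hc.two_le_card_filter_mem_edges h₁)
              (hc.two_le_card_filter_mem_edges h₂)
          _ = _ := (Finset.card_union_of_disjoint hdisj).symm
          _ ≤ _ := Finset.card_le_card (Finset.union_subset (hsub b₁ hb₁) (hsub b₂ hb₂))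
    _ ≤ ∑ b ∈ B, (X.incidenceFinset b).card := Finset.card_biUnion_le
    _ = ∑ b ∈ B, X.degree b := by simp only [card_incidenceFinset_eq_degree]

theorem sum_degree_le_four_mul_card (hB : ∀ x y, X.Adj x y → x ∈ B → y ∉ B)
    (hdeg : ∀ x ∉ B, 0 < X.degree x → X.degree x = 2) (hX : X.cycleEdgeSets.PairwiseDisjoint id)
    (hcyc : ∀ (a : Ω) (c : X.Walk a a), c.IsCycle →
      ∃ b₁ ∈ B, ∃ b₂ ∈ B, b₁ ≠ b₂ ∧ b₁ ∈ c.support ∧ b₂ ∈ c.support) :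
    ∑ b ∈ B, X.degree b ≤ 4 * B.card := by
  rcases B.eq_empty_or_nonempty with rfl | hBne
  · simp
  set I := Bᶜ.filter fun x => 0 < X.degree x
  have hsum : ∑ x, X.degree x = ∑ b ∈ B, X.degree b + 2 * I.card := by
    rw [← Finset.sum_add_sum_compl B, Finset.card_filter, Finset.mul_sum]
    refine congrArg _ (Finset.sum_congr rfl fun x hx => ?_)
    rcases Nat.eq_zero_or_pos (X.degree x) with h | h
    · simp [h]
    · simp [hdeg x (Finset.mem_compl.mp hx) h]
  have hrank := ncard_edgeSet_lt_of_forall_not_adj (X := X) (A := B ∪ I)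
    (hBne.mono Finset.subset_union_left) fun x hx y hxy => by
      have hpos := X.degree_pos_iff_exists_adj x |>.mpr ⟨y, hxy⟩
      simp [I, hpos] at hx
  rw [← coe_edgeFinset, Set.ncard_coe_finset] at hrank
  have := Finset.card_union_le B I
  have := four_mul_ncard_cycleEdgeSets_le_sum_degree hB hX hcyc
  have := X.sum_degrees_eq_twice_card_edges
  omega

end EdgeDisjointCycles

end SimpleGraph

lemma IsCactus.pairwiseDisjoint_cycleEdgeSets {Ω : Type*} [DecidableEq Ω] {X : SimpleGraph Ω}
    (hX : IsCactus X) : X.cycleEdgeSets.PairwiseDisjoint id := by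
  rintro _ ⟨a, c₁, hc₁, rfl⟩ _ ⟨b, c₂, hc₂, rfl⟩ hne
  refine Finset.disjoint_left.mpr fun e he₁ he₂ => hne ?_
  have := hX.2 e a b c₁ c₂ hc₁ hc₂ (List.mem_toFinset.mp he₁) (List.mem_toFinset.mp he₂)
  ext e'
  simpa using Set.ext_iff.mp this e'

section LinkingCables

variable {Ω : Type*} {T : SimpleGraph Ω} {B : Finset Ω} {l : List Ω}

def IsLinkingCable (T : SimpleGraph Ω) (B : Finset Ω) (l : List Ω) : Prop :=
  IsCablePath T l ∧ 3 ≤ l.length ∧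
    ∀ (i : ℕ) (hi : i < l.length), l[i] ∈ B ↔ i = 0 ∨ i = l.length - 1

def cableGraph (T : SimpleGraph Ω) (B : Finset Ω) : SimpleGraph Ω :=
  fromRel fun x y =>
    ∃ l, IsLinkingCable T B l ∧ ∃ (i : ℕ) (h : i + 1 < l.length), l[i] = x ∧ l[i + 1] = y

namespace IsLinkingCable

lemma adj (hl : IsLinkingCable T B l) {i : ℕ} (h : i + 1 < l.length) : T.Adj l[i] l[i + 1] :=
  List.isChain_iff_getElem.mp hl.1.2.2.1 i h

lemma adj_iff (hl : IsLinkingCable T B l) {i : ℕ} (h1 : 1 ≤ i) (h2 : i + 1 < l.length) (y : Ω) :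
    T.Adj l[i] y ↔ y = l[i - 1] ∨ y = l[i + 1] := by
  simpa using hl.1.2.2.2 i h2 h1 y

lemma cableGraph_adj (hl : IsLinkingCable T B l) {i : ℕ} (h : i + 1 < l.length) :
    (cableGraph T B).Adj l[i] l[i + 1] :=
  ⟨(hl.adj h).ne, Or.inl ⟨l, hl, i, h, rfl, rfl⟩⟩

lemma neighborSet_cableGraph (hl : IsLinkingCable T B l) {i : ℕ} (h1 : 1 ≤ i)
    (h2 : i + 1 < l.length) :
    (cableGraph T B).neighborSet l[i] = {l[i - 1], l[i + 1]} := by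
  ext y
  refine ⟨fun hy => (hl.adj_iff h1 h2 y).mp ?_, ?_⟩
  · obtain ⟨-, ⟨m, hm, j, hj, hx, hy⟩ | ⟨m, hm, j, hj, hy, hx⟩⟩ := hy
    · exact hx ▸ hy ▸ hm.adj hj
    · exact hx ▸ hy ▸ (hm.adj hj).symm
  · rintro (rfl | rfl)
    · have := hl.cableGraph_adj (i := i - 1) (by omega)
      simp only [show i - 1 + 1 = i by omega] at this
      exact this.symm
    · exact hl.cableGraph_adj h2

lemma getElem_sub_one_ne (hl : IsLinkingCable T B l) {i : ℕ} (h : i + 1 < l.length) :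
    l[i - 1] ≠ l[i + 1] := by
  rw [Ne, hl.1.2.1.getElem_inj_iff]
  omega

end IsLinkingCable

lemma cableGraph_le : cableGraph T B ≤ T := by
  rintro x y ⟨-, ⟨l, hl, i, h, rfl, rfl⟩ | ⟨l, hl, i, h, rfl, rfl⟩⟩
  · exact hl.adj h
  · exact (hl.adj h).symm

lemma exists_isLinkingCable_of_cableGraph_adj {x y : Ω} (h : (cableGraph T B).Adj x y)
    (hx : x ∉ B) : ∃ l, IsLinkingCable T B l ∧ ∃ i, 1 ≤ i ∧ ∃ h : i + 1 < l.length, l[i] = x := by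
  obtain ⟨-, ⟨l, hl, i, h, rfl, -⟩ | ⟨l, hl, i, h, -, rfl⟩⟩ := h
  · refine ⟨l, hl, i, ?_, by omega, rfl⟩
    by_contra hi
    exact hx ((hl.2.2 i _).mpr (by omega))
  · refine ⟨l, hl, i + 1, by omega, ?_, rfl⟩
    by_contra hi
    exact hx ((hl.2.2 (i + 1) _).mpr (by omega))

lemma cableGraph_adj_notMem {x y : Ω} (h : (cableGraph T B).Adj x y) (hx : x ∈ B) : y ∉ B := by
  obtain ⟨-, ⟨l, hl, i, h, rfl, rfl⟩ | ⟨l, hl, i, h, rfl, rfl⟩⟩ := h <;>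
  · rw [hl.2.2] at hx ⊢
    have := hl.2.1
    omega

lemma degree_cableGraph_eq_two [Fintype Ω] [DecidableRel (cableGraph T B).Adj] {x : Ω}
    (hx : x ∉ B) (hpos : 0 < (cableGraph T B).degree x) : (cableGraph T B).degree x = 2 := by
  obtain ⟨y, hxy⟩ := (cableGraph T B).degree_pos_iff_exists_adj x |>.mp hpos
  obtain ⟨l, hl, i, h1, h2, rfl⟩ := exists_isLinkingCable_of_cableGraph_adj hxy hx
  rw [← card_neighborSet_eq_degree, ← Nat.card_eq_fintype_card, Nat.card_coe_set_eq,
    hl.neighborSet_cableGraph h1 h2, Set.ncard_pair (hl.getElem_sub_one_ne h2)]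

/-- Inner cable vertices have degree two, so a cycle entering a linking cable follows it to both
ends. -/
lemma exists_mem_support_of_isCycle_cableGraph {a : Ω} {c : (cableGraph T B).Walk a a}
    (hc : c.IsCycle) : ∃ b₁ ∈ B, ∃ b₂ ∈ B, b₁ ≠ b₂ ∧ b₁ ∈ c.support ∧ b₂ ∈ c.support := by
  have hadj := (c.toSubgraph_adj_snd hc.not_nil).adj_sub
  obtain ⟨x, hxB, y, hxy, hxc⟩ : ∃ x ∉ B, ∃ y, (cableGraph T B).Adj x y ∧ x ∈ c.support := by
    by_cases ha : a ∈ B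
    · exact ⟨_, cableGraph_adj_notMem hadj ha, a, hadj.symm, c.snd_mem_support_of_mem_edges
        (Walk.adj_toSubgraph_iff_mem_edges.mp (c.toSubgraph_adj_snd hc.not_nil))⟩
    · exact ⟨a, ha, _, hadj, c.start_mem_support⟩
  obtain ⟨l, hl, i, h1, h2, rfl⟩ := exists_isLinkingCable_of_cableGraph_adj hxy hxB
  have hclosed : ∀ (j : ℕ) (h1 : 1 ≤ j) (h2 : j + 1 < l.length), l[j] ∈ c.support →
      l[j - 1] ∈ c.support ∧ l[j + 1] ∈ c.support := fun j h1 h2 hj => by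
    have hN : c.toSubgraph.neighborSet l[j] = {l[j - 1], l[j + 1]} := by
      refine Set.eq_of_subset_of_ncard_le (fun z hz => ?_) ?_
      · rw [← hl.neighborSet_cableGraph h1 h2]
        exact hz.adj_sub
      · rw [hc.ncard_neighborSet_toSubgraph_eq_two hj, Set.ncard_pair (hl.getElem_sub_one_ne h2)]
    have hmem : ∀ z ∈ c.toSubgraph.neighborSet l[j], z ∈ c.support := fun z hz =>
      Walk.mem_support_of_adj_toSubgraph hz.symm
    exact ⟨hmem _ (by simp [hN]), hmem _ (by simp [hN])⟩
  have hall := List.forall_getElem_mem_of_interior (S := {v | v ∈ c.support}) hclosed h1 h2 hxc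
  refine ⟨l[0], (hl.2.2 0 _).mpr (by omega), l[l.length - 1], (hl.2.2 _ _).mpr (by omega), ?_,
    hall 0 (by omega), hall _ (by omega)⟩
  rw [Ne, hl.1.2.1.getElem_inj_iff]
  have := hl.2.1
  omega

variable [Fintype Ω] [DecidableEq Ω] [DecidableRel (cableGraph T B).Adj]

lemma card_biUnion_neighborFinset_cableGraph_le (hT : T.cycleEdgeSets.PairwiseDisjoint id) :
    (B.biUnion fun b => (cableGraph T B).neighborFinset b).card ≤ 4 * B.card := by
  refine Finset.card_biUnion_le.trans ?_
  simp only [card_neighborFinset_eq_degree]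
  exact sum_degree_le_four_mul_card (fun _ _ h hx => cableGraph_adj_notMem h hx)
    (fun _ hx => degree_cableGraph_eq_two hx) (hT.subset (cycleEdgeSets_mono cableGraph_le))
    fun _ _ hc => exists_mem_support_of_isCycle_cableGraph hc

theorem exists_fin_three_coloring_cableGraph (hT : T.cycleEdgeSets.PairwiseDisjoint id)
    (g : Ω → Fin 3) :
    ∃ φ : Ω → Fin 3, (∀ t ∈ B, ∀ t' ∈ B, T.Adj t t' → φ t ≠ φ t') ∧
      (∀ b ∈ B, ∀ c, (cableGraph T B).Adj b c → φ b ≠ φ c) ∧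
      ∀ w ∉ B ∪ B.biUnion fun b => (cableGraph T B).neighborFinset b, φ w = g w := by
  obtain ⟨κ, hκ⟩ := exists_fin_three_coloring_of_pairwiseDisjoint_cycleEdgeSets hT B
  have hfree : ∀ w ∉ B, ∃ c, ∀ y ∈ (cableGraph T B).neighborFinset w, κ y ≠ c := fun w hw =>
    Fin.exists_forall_ne_of_card_le_two (by
      rw [card_neighborFinset_eq_degree]
      rcases Nat.eq_zero_or_pos ((cableGraph T B).degree w) with h | h
      · omega
      · exact (degree_cableGraph_eq_two hw h).le) κ
  choose! c hc using hfree
  refine ⟨fun w => if w ∈ B then κ w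
    else if w ∈ B.biUnion fun b => (cableGraph T B).neighborFinset b then c w else g w,
    ?_, ?_, ?_⟩
  · intro t ht t' ht' hadj
    simpa only [if_pos ht, if_pos ht'] using hκ t ht t' ht' hadj
  · intro b hb x hbx
    have hx := cableGraph_adj_notMem hbx hb
    have hxN : x ∈ B.biUnion fun b => (cableGraph T B).neighborFinset b :=
      Finset.mem_biUnion.mpr ⟨b, hb, (mem_neighborFinset _ _ _).mpr hbx⟩
    simp only [if_pos hb, if_neg hx, if_pos hxN]
    exact hc x hx b ((mem_neighborFinset _ _ _).mpr hbx.symm)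
  · intro w hw
    rw [Finset.mem_union, not_or] at hw
    simp only [if_neg hw.1, if_neg hw.2]

end LinkingCables

section WitnessStructures

variable {V W : Type*} {T : SimpleGraph W} {ψ : V → W} {B : Finset W}

lemma card_add_card_filter_bigWitness_le [Fintype V] [Fintype W] [DecidableEq W]
    [DecidablePred (BigWitness ψ)] (hψ : Function.Surjective ψ) :
    Fintype.card W + (Finset.univ.filter (BigWitness ψ)).card ≤ Fintype.card V := by
  calc Fintype.card W + (Finset.univ.filter (BigWitness ψ)).card
        = ∑ w, (1 + if BigWitness ψ w then 1 else 0) := by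
          rw [Finset.sum_add_distrib, Finset.card_filter]; simp
    _ ≤ ∑ w, (Finset.univ.filter fun v => ψ v = w).card := Finset.sum_le_sum fun w _ => by
          split_ifs with hw
          · obtain ⟨a, b, hab, ha, hb⟩ := hw
            exact Finset.one_lt_card.mpr ⟨a, by simp [ha], b, by simp [hb], hab⟩
          · obtain ⟨v, hv⟩ := hψ w
            exact Finset.card_pos.mpr ⟨v, by simp [hv]⟩
    _ = Fintype.card V :=
          (Finset.card_eq_sum_card_fiberwise fun v _ => Finset.mem_univ (ψ v)).symm

lemma isLinkingCable_of_bigWitness (hB : ∀ t, t ∈ B ↔ BigWitness ψ t) {l : List W}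
    (hc : IsCablePath T l) (hlen : 3 ≤ l.length) (h0 : BigWitness ψ (l.get ⟨0, by omega⟩))
    (hL : BigWitness ψ (l.get ⟨l.length - 1, by omega⟩))
    (hint : ∀ (i : ℕ) (h : i < l.length), 1 ≤ i → i < l.length - 1 →
      ¬ BigWitness ψ (l.get ⟨i, h⟩)) :
    IsLinkingCable T B l := by
  refine ⟨hc, hlen, fun i hi => ⟨fun hiB => ?_, ?_⟩⟩
  · by_contra hend
    exact hint i hi (by omega) (by omega) ((hB _).mp hiB)
  · rintro (rfl | rfl)
    · exact (hB _).mpr h0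
    · exact (hB _).mpr hL

theorem compatible_comp (hB : ∀ t, t ∈ B ↔ BigWitness ψ t) {φ : W → Fin 3}
    (hφB : ∀ t ∈ B, ∀ t' ∈ B, T.Adj t t' → φ t ≠ φ t')
    (hφN : ∀ b ∈ B, ∀ c, (cableGraph T B).Adj b c → φ b ≠ φ c) :
    Compatible T ψ (φ ∘ ψ) := by
  refine ⟨fun x y h => by simp [h], fun t t' ht ht' hadj x y hx hy => ?_,
    fun l hc hlen h0 hL hint => ?_⟩
  · simp only [Function.comp_apply, hx, hy]
    exact hφB t ((hB t).mpr ht) t' ((hB t').mpr ht') hadj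
  have hl := isLinkingCable_of_bigWitness hB hc hlen h0 hL hint
  refine ⟨fun x y hx hy => ?_, fun x y hx hy => ?_⟩
  · simp only [Function.comp_apply, hx, hy, List.get_eq_getElem]
    exact hφN _ ((hl.2.2 0 _).mpr (by omega)) _ (hl.cableGraph_adj (i := 0) (by omega))
  · have hadj := hl.cableGraph_adj (i := l.length - 2) (by omega)
    simp only [show l.length - 2 + 1 = l.length - 1 by omega] at hadj
    simp only [Function.comp_apply, hx, hy, List.get_eq_getElem]
    exact hφN _ ((hl.2.2 _ _).mpr (by omega)) _ hadj.symm

end WitnessStructures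

theorem stmt6_general {V : Type} {W : Type} [Fintype V] [DecidableEq V] [Fintype W]
    (G : SimpleGraph V) (T : SimpleGraph W) (k : ℕ) (ψ : V → W)
    (hT : IsCactus T) (hψ : IsContraction G T ψ)
    (hk : Fintype.card V ≤ Fintype.card W + k) :
    Fintype.card (V → Fin 3) ≤
      3 ^ (6 * k) * {f : V → Fin 3 | Compatible T ψ f}.ncard := by
  classical
  set B := Finset.univ.filter (BigWitness ψ)
  set N := B.biUnion fun b => (cableGraph T B).neighborFinset b
  choose r hr using hψ.1
  set S := (Finset.univ \ Finset.univ.image r) ∪ (B ∪ N).image r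
  have hS : S.card ≤ 6 * k := by
    have : Fintype.card W + B.card ≤ Fintype.card V := card_add_card_filter_bigWitness_le hψ.1
    have : N.card ≤ 4 * B.card :=
      card_biUnion_neighborFinset_cableGraph_le hT.pairwiseDisjoint_cycleEdgeSets
    have : S.card ≤ _ := card_sdiff_image_union_image_le hr (B ∪ N)
    have := Finset.card_union_le B N
    omega
  refine (card_fun_le_pow_card_mul_ncard (P := Compatible T ψ) S fun g => ?_).trans ?_
  · obtain ⟨φ, hφB, hφN, hφg⟩ :=
      exists_fin_three_coloring_cableGraph hT.pairwiseDisjoint_cycleEdgeSets (g ∘ r)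
    refine ⟨φ ∘ ψ, compatible_comp (B := B) (fun t => by simp [B]) hφB hφN, fun v hv => ?_⟩
    have hvr : v ∈ Finset.univ.image r := by_contra fun h => hv (by simp [S, h])
    obtain ⟨w, -, rfl⟩ := Finset.mem_image.mp hvr
    simp only [Function.comp_apply, hr]
    exact hφg w fun hw => hv (Finset.mem_union_right _ (Finset.mem_image_of_mem r hw))
  · simpa using Nat.mul_le_mul_right _ (Nat.pow_le_pow_right (by norm_num) hS)

/-- For a 2-connected graph `G` that is `k`-contractible to a cactus `T` with witness
structure given by `ψ`, a uniformly random 3-colouring of `V(G)` is compatible with the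
witness structure with probability at least `1 / 3 ^ (6 k)`. -/
theorem stmt6 {V : Type} {W : Type} [Fintype V] [DecidableEq V] [Fintype W]
    (G : SimpleGraph V) (T : SimpleGraph W) (k : ℕ) (ψ : V → W)
    (hG : TwoConnected G) (hT : IsCactus T) (hψ : IsContraction G T ψ)
    (hk : Fintype.card V ≤ Fintype.card W + k) :
    Fintype.card (V → Fin 3) ≤
      3 ^ (6 * k) * {f : V → Fin 3 | Compatible T ψ f}.ncard :=
  stmt6_general G T k ψ hT hψ hk
end

section
/- If G is a 2-connected graph whose vertex set can be partitioned into the vertex sets of two cable paths P and Q of G, then G has a Hamiltonian cycle. -/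
open SimpleGraph

universe u v

/-!
Every edge between the two cable paths joins an end of one to an end of the other, since inner
vertices of a cable path have no neighbours off the path. Deleting any vertex `z` keeps `G`
connected, so as long as both paths keep a vertex other than `z` some such end-to-end edge
avoids `z`. Applying this with `z` each of the four ends forces the ends to be matched
crosswise, i.e. the paths close up into a Hamiltonian cycle, after reversing one if needed.
-/

namespace SimpleGraph

variable {V : Type*} {G : SimpleGraph V}

theorem exists_adj_across_of_connected_induce_compl {z : V}
    (hz : (G.induce ({z}ᶜ : Set V)).Connected) (S : Set V) {x y : V}
    (hx : x ∈ S) (hxz : x ≠ z) (hy : y ∉ S) (hyz : y ≠ z) :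
    ∃ u v, u ∈ S ∧ v ∉ S ∧ G.Adj u v ∧ u ≠ z ∧ v ≠ z := by
  obtain ⟨w⟩ := hz.preconnected ⟨x, hxz⟩ ⟨y, hyz⟩
  obtain ⟨d, -, hd₁, hd₂⟩ := w.exists_boundary_dart {v | v.1 ∈ S} hx hy
  exact ⟨d.fst, d.snd, hd₁, hd₂, d.adj, d.fst.2, d.snd.2⟩

variable [DecidableEq V]

theorem exists_isHamiltonianCycle_of_isChain {l : List V} (hne : l ≠ [])
    (hchain : l.IsChain G.Adj) (hnd : l.Nodup) (hmem : ∀ x, x ∈ l) (hlen : 3 ≤ l.length)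
    (hclose : G.Adj (l.getLast hne) (l.head hne)) :
    ∃ (a : V) (c : G.Walk a a), c.IsHamiltonianCycle := by
  set c := Walk.cons hclose (.ofSupport l hne hchain)
  have hsupp : c.tail.support = l := by simp [c]
  have hpath : c.tail.IsPath := by rw [Walk.isPath_def, hsupp]; exact hnd
  refine ⟨_, c, ?_, ?_⟩
  · rw [Walk.isCycle_iff_isPath_tail_and_le_length]
    exact ⟨hpath, by simp [c]; omega⟩
  · exact hpath.isHamiltonian_of_mem (by simpa [hsupp] using hmem)

theorem exists_isHamiltonianCycle_of_append {P Q : List V}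
    (hP : P ≠ []) (hQ : Q ≠ []) (hcP : P.IsChain G.Adj) (hcQ : Q.IsChain G.Adj)
    (hnd : (P ++ Q).Nodup) (hmem : ∀ x, x ∈ P ++ Q) (hlen : 3 ≤ (P ++ Q).length)
    (hPQ : G.Adj (P.getLast hP) (Q.head hQ)) (hQP : G.Adj (Q.getLast hQ) (P.head hP)) :
    ∃ (a : V) (c : G.Walk a a), c.IsHamiltonianCycle := by
  refine exists_isHamiltonianCycle_of_isChain (by simp [hP]) ?_ hnd hmem hlen ?_
  · refine List.isChain_append.2 ⟨hcP, hcQ, fun x hx y hy => ?_⟩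
    rw [List.getLast?_eq_some_getLast hP, Option.mem_some_iff] at hx
    rw [List.head?_eq_some_head hQ, Option.mem_some_iff] at hy
    exact hx ▸ hy ▸ hPQ
  · rwa [List.getLast_append_of_ne_nil _ hQ, List.head_append_left hP]

theorem exists_isHamiltonianCycle_of_append_of_adj_ends {P Q : List V}
    (hP : P ≠ []) (hQ : Q ≠ []) (hcP : P.IsChain G.Adj) (hcQ : Q.IsChain G.Adj)
    (hnd : (P ++ Q).Nodup) (hmem : ∀ x, x ∈ P ++ Q) (hlen : 3 ≤ (P ++ Q).length)
    (hends : (G.Adj (P.getLast hP) (Q.head hQ) ∧ G.Adj (P.head hP) (Q.getLast hQ)) ∨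
      (G.Adj (P.getLast hP) (Q.getLast hQ) ∧ G.Adj (P.head hP) (Q.head hQ))) :
    ∃ (a : V) (c : G.Walk a a), c.IsHamiltonianCycle := by
  rcases hends with ⟨hPQ, hQP⟩ | ⟨hPQ, hQP⟩
  · exact exists_isHamiltonianCycle_of_append hP hQ hcP hcQ hnd hmem hlen hPQ hQP.symm
  · have hperm : (P ++ Q.reverse).Perm (P ++ Q) := Q.reverse_perm.append_left P
    refine exists_isHamiltonianCycle_of_append hP (List.reverse_ne_nil_iff.2 hQ) hcP
      (List.isChain_reverse.2 (hcQ.imp fun _ _ h => h.symm)) (hperm.nodup_iff.2 hnd)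
      (fun x => hperm.mem_iff.2 (hmem x)) (hperm.length_eq ▸ hlen) ?_ ?_
    · rwa [List.head_reverse]
    · rw [List.getLast_reverse]
      exact hQP.symm

end SimpleGraph

/-- `a, a'` and `b, b'` play the ends of two disjoint paths, and `R` adjacency between them. -/
theorem adj_ends_of_forall_exists_avoiding {V : Type*} {R : V → V → Prop} {a a' b b' : V}
    (hab : a ≠ b) (hab' : a ≠ b') (ha'b : a' ≠ b) (ha'b' : a' ≠ b')
    (hdeg : a ≠ a' ∨ b ≠ b')
    (hcross : ∀ z, (a ≠ z ∨ a' ≠ z) → (b ≠ z ∨ b' ≠ z) →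
      ∃ x y, (x = a ∨ x = a') ∧ (y = b ∨ y = b') ∧ R x y ∧ x ≠ z ∧ y ≠ z) :
    (R a' b ∧ R a b') ∨ (R a' b' ∧ R a b) := by
  have ha := hcross a
  have ha' := hcross a'
  have hb := hcross b
  have hb' := hcross b'
  rcases eq_or_ne a a' with rfl | haa' <;> rcases eq_or_ne b b' with rfl | hbb' <;> grind

namespace IsCablePath

variable {V : Type*} {G : SimpleGraph V} {P Q : List V}

theorem eq_head_or_eq_getLast_of_adj (hP : IsCablePath G P) {x y : V}
    (hx : x ∈ P) (hy : y ∉ P) (hxy : G.Adj x y) :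
    x = P.head hP.1 ∨ x = P.getLast hP.1 := by
  obtain ⟨⟨i, hi⟩, rfl⟩ := List.mem_iff_get.1 hx
  rcases Nat.eq_zero_or_pos i with rfl | hpos
  · simp [List.head_eq_getElem_zero]
  rcases Nat.lt_or_ge (i + 1) P.length with hlt | hge
  · rcases (hP.2.2.2 i hlt hpos y).1 hxy with rfl | rfl <;> exact absurd (List.get_mem _ _) hy
  · right
    simp only [List.get_eq_getElem, List.getLast_eq_getElem]
    congr 1
    omega

theorem exists_adj_ends_avoiding (hP : IsCablePath G P) (hQ : IsCablePath G Q)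
    (hpart : ∀ x, x ∈ P ↔ x ∉ Q) {z : V} (hz : (G.induce ({z}ᶜ : Set V)).Connected)
    (hPz : P.head hP.1 ≠ z ∨ P.getLast hP.1 ≠ z)
    (hQz : Q.head hQ.1 ≠ z ∨ Q.getLast hQ.1 ≠ z) :
    ∃ x y, (x = P.head hP.1 ∨ x = P.getLast hP.1) ∧
      (y = Q.head hQ.1 ∨ y = Q.getLast hQ.1) ∧ G.Adj x y ∧ x ≠ z ∧ y ≠ z := by
  obtain ⟨p, hp, hpz⟩ : ∃ p ∈ P, p ≠ z := by
    rcases hPz with h | h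
    exacts [⟨_, P.head_mem hP.1, h⟩, ⟨_, P.getLast_mem hP.1, h⟩]
  obtain ⟨q, hq, hqz⟩ : ∃ q ∈ Q, q ≠ z := by
    rcases hQz with h | h
    exacts [⟨_, Q.head_mem hQ.1, h⟩, ⟨_, Q.getLast_mem hQ.1, h⟩]
  obtain ⟨x, y, hx, hy, hxy, hxz, hyz⟩ :=
    SimpleGraph.exists_adj_across_of_connected_induce_compl hz {v | v ∈ P} hp hpz
      ((hpart q).not.2 (not_not.2 hq)) hqz
  have hyQ : y ∈ Q := by simpa [hpart] using hy
  exact ⟨x, y, hP.eq_head_or_eq_getLast_of_adj hx hy hxy,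
    hQ.eq_head_or_eq_getLast_of_adj hyQ ((hpart x).1 hx) hxy.symm, hxy, hxz, hyz⟩

end IsCablePath

theorem stmt8_general {V : Type} [DecidableEq V] (G : SimpleGraph V)
    (hG : TwoConnected G) (P Q : List V)
    (hP : IsCablePath G P) (hQ : IsCablePath G Q)
    (hpart : ∀ x : V, x ∈ P ↔ x ∉ Q) :
    ∃ (a : V) (c : G.Walk a a), c.IsHamiltonianCycle := by
  obtain ⟨-, hcard, hcon⟩ := hG
  have hne : ∀ x ∈ P, ∀ y ∈ Q, x ≠ y := fun x hx y hy hxy => (hpart x).1 hx (hxy ▸ hy)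
  have hmem : ∀ x, x ∈ P ++ Q := fun x => List.mem_append.2 <| by
    by_cases hx : x ∈ Q
    exacts [.inr hx, .inl ((hpart x).2 hx)]
  have hnd : (P ++ Q).Nodup :=
    List.nodup_append'.2 ⟨hP.2.1, hQ.2.1, fun x hx hx' => hne x hx x hx' rfl⟩
  have hlen : 3 ≤ (P ++ Q).length := hcard.trans <| by
    simpa using Nat.card_le_card_of_surjective (P ++ Q).get fun x => List.mem_iff_get.1 (hmem x)
  have hdeg : P.head hP.1 ≠ P.getLast hP.1 ∨ Q.head hQ.1 ≠ Q.getLast hQ.1 := by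
    by_contra! h
    obtain ⟨x, rfl⟩ := (hP.2.1.head_eq_getLast_iff hP.1).1 h.1
    obtain ⟨y, rfl⟩ := (hQ.2.1.head_eq_getLast_iff hQ.1).1 h.2
    simp at hlen
  refine SimpleGraph.exists_isHamiltonianCycle_of_append_of_adj_ends hP.1 hQ.1 hP.2.2.1 hQ.2.2.1
    hnd hmem hlen (adj_ends_of_forall_exists_avoiding ?_ ?_ ?_ ?_ hdeg
      fun z hPz hQz => hP.exists_adj_ends_avoiding hQ hpart (hcon z) hPz hQz)
  all_goals exact hne _ (by simp) _ (by simp)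

/-- A 2-connected graph whose vertex set is partitioned into two cable paths has a
Hamiltonian cycle. -/
theorem stmt8 {V : Type} [Fintype V] [DecidableEq V] (G : SimpleGraph V)
    (hG : TwoConnected G) (P Q : List V)
    (hP : IsCablePath G P) (hQ : IsCablePath G Q)
    (hpart : ∀ x : V, x ∈ P ↔ x ∉ Q) :
    ∃ (a : V) (c : G.Walk a a), c.IsHamiltonianCycle :=
  stmt8_general G hG P Q hP hQ hpart
end

section
/- For any positive integers n and k, there exists an (n,k)-universal set of size at most 2^k · k^{O(log k)} · log n, i.e., a family H of subsets of {1,...,n} such that for every S ⊆ {1,...,n} with |S| ≤ k, the family {S ∩ A : A ∈ H} contains all subsets of S. -/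
open SimpleGraph

universe u v

/-
A family of `m` independent uniformly random subsets misses a fixed pattern `S ∩ A = S'`
with `|S| = k` with probability `(1 - 2⁻ᵏ)ᵐ`. There are at most `(2n)ᵏ` such patterns, and
`(1 - 2⁻ᵏ)^(2ᵏ r) < 2⁻ʳ`, so the union bound leaves a good family once `m = 2ᵏ k (log n + 2)`.
Sets `S` with `|S| < k` are covered by enlarging them to size `k`.
-/

open Finset

section Universal

variable {α : Type*} [Fintype α] [DecidableEq α]

def IsUniversalFamily (k : ℕ) (H : Finset (Finset α)) : Prop :=
  ∀ S : Finset α, #S ≤ k → ∀ S' ⊆ S, ∃ A ∈ H, S ∩ A = S'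

theorem isUniversalFamily_of_card_eq {k : ℕ} {H : Finset (Finset α)} (hk : k ≤ Fintype.card α)
    (hH : ∀ S : Finset α, #S = k → ∀ S' ⊆ S, ∃ A ∈ H, S ∩ A = S') : IsUniversalFamily k H := by
  intro S hS S' hS'
  obtain ⟨T, hST, hT⟩ := exists_superset_card_eq hS hk
  obtain ⟨A, hA, hTA⟩ := hH T hT S' (hS'.trans hST)
  refine ⟨A, hA, ?_⟩
  rw [← inter_eq_left.mpr hST, inter_assoc, hTA, inter_eq_right.mpr hS']

theorem isUniversalFamily_powerset (k : ℕ) : IsUniversalFamily k (univ : Finset α).powerset :=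
  fun _ _ S' hS' => ⟨S', mem_powerset.mpr (subset_univ S'), inter_eq_right.mpr hS'⟩

theorem isUniversalFamily_one : IsUniversalFamily 1 ({∅, univ} : Finset (Finset α)) := by
  intro S hS S' hS'
  rcases S'.eq_empty_or_nonempty with rfl | hne
  · exact ⟨∅, by simp, inter_empty S⟩
  · have : S' = S := eq_of_subset_of_card_le hS' (hS.trans hne.card_pos)
    exact ⟨univ, by simp, by rw [inter_univ, this]⟩

theorem two_pow_card_sub_le_card_filter_inter_eq {S S' : Finset α} (hS' : S' ⊆ S) :
    2 ^ (Fintype.card α - #S) ≤ #{A : Finset α | S ∩ A = S'} := by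
  rw [← card_compl, ← card_powerset]
  have hdisj : ∀ B ∈ Sᶜ.powerset, ∀ x ∈ B, x ∉ S := fun B hB x hx =>
    mem_compl.mp (mem_powerset.mp hB hx)
  refine card_le_card_of_injOn (· ∪ S') (fun B hB => ?_) (fun B hB C hC hBC => ?_)
  · refine mem_filter.mpr ⟨mem_univ _, ?_⟩
    ext x
    have := hdisj B hB x
    have := @hS' x
    simp only [mem_inter, mem_union]
    tauto
  · ext x
    have hBC := congrArg (x ∈ ·) hBC
    have := hdisj B hB x
    have := hdisj C hC x
    have := @hS' x
    simp only [mem_union, eq_iff_iff] at hBC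
    tauto

end Universal

theorem exists_forall_exists_mem_of_card_mul_pow_lt {α ι : Type*} [Fintype α] [DecidableEq α]
    (R : Finset ι) (good : ι → Finset α) {d m : ℕ} (hgood : ∀ r ∈ R, d ≤ #(good r))
    (hcount : #R * (Fintype.card α - d) ^ m < Fintype.card α ^ m) :
    ∃ f : Fin m → α, ∀ r ∈ R, ∃ i, f i ∈ good r := by
  by_contra! hbad
  have hcover : (univ : Finset (Fin m → α)) ⊆
      R.biUnion fun r => Fintype.piFinset fun _ => (good r)ᶜ := fun f _ => by
      obtain ⟨r, hr, hf⟩ := hbad f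
      exact mem_biUnion.mpr ⟨r, hr, Fintype.mem_piFinset.mpr fun i => mem_compl.mpr (hf i)⟩
  have hbad_card : ∀ r ∈ R, #(Fintype.piFinset fun _ : Fin m => (good r)ᶜ) ≤
      (Fintype.card α - d) ^ m := fun r hr => by
    rw [Fintype.card_piFinset, prod_const, card_univ, Fintype.card_fin, card_compl]
    exact Nat.pow_le_pow_left (Nat.sub_le_sub_left (hgood r hr) _) m
  have := calc Fintype.card α ^ m = #(univ : Finset (Fin m → α)) := by simp
    _ ≤ ∑ r ∈ R, #(Fintype.piFinset fun _ : Fin m => (good r)ᶜ) :=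
      (card_le_card hcover).trans card_biUnion_le
    _ ≤ #R * (Fintype.card α - d) ^ m := sum_le_card_nsmul _ _ _ hbad_card
  omega

theorem two_mul_sub_one_pow_lt_pow {t : ℕ} (ht : 2 ≤ t) : 2 * (t - 1) ^ t < t ^ t := by
  have htpos : (0 : ℝ) < t := by positivity
  have hexp : Real.exp (-1) < 1 / 2 := by
    rw [Real.exp_neg, one_div]
    exact inv_strictAnti₀ two_pos (by linarith [Real.exp_one_gt_d9])
  have hbound : ((t - 1 : ℝ) / t) ^ t < 1 / 2 :=
    calc ((t - 1 : ℝ) / t) ^ t = (1 - 1 / (t : ℝ)) ^ t := by rw [sub_div, div_self htpos.ne']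
      _ ≤ Real.exp (-1) := Real.one_sub_div_pow_le_exp_neg (by exact_mod_cast (by omega : 1 ≤ t))
      _ < 1 / 2 := hexp
  rw [div_pow, div_lt_iff₀ (by positivity)] at hbound
  have : ((2 * (t - 1) ^ t : ℕ) : ℝ) < ((t ^ t : ℕ) : ℝ) := by
    push_cast [Nat.cast_sub (by omega : 1 ≤ t)]
    linarith
  exact_mod_cast this

theorem pow_mul_two_pow_sub_one_pow_lt (n : ℕ) {k : ℕ} (hk : 0 < k) :
    (2 * n) ^ k * (2 ^ k - 1) ^ (2 ^ k * (k * (Nat.log 2 n + 2))) <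
      (2 ^ k) ^ (2 ^ k * (k * (Nat.log 2 n + 2))) := by
  set t := 2 ^ k
  set r := k * (Nat.log 2 n + 2)
  have ht : 2 ≤ t := Nat.le_self_pow hk.ne' 2
  have hn : (2 * n) ^ k < 2 ^ r := by
    rw [pow_mul']
    refine Nat.pow_lt_pow_left ?_ hk.ne'
    have := Nat.lt_pow_succ_log_self one_lt_two n
    rw [pow_succ] at this ⊢
    omega
  calc (2 * n) ^ k * (t - 1) ^ (t * r) < 2 ^ r * (t - 1) ^ (t * r) :=
        Nat.mul_lt_mul_of_pos_right hn (pow_pos (by omega) _)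
    _ = (2 * (t - 1) ^ t) ^ r := by rw [mul_pow, ← pow_mul]
    _ ≤ (t ^ t) ^ r := Nat.pow_le_pow_left (two_mul_sub_one_pow_lt_pow ht).le r
    _ = t ^ (t * r) := (pow_mul t t r).symm

theorem exists_isUniversalFamily_card_le {α : Type*} [Fintype α] [DecidableEq α] {k : ℕ}
    (hk : 0 < k) (hkn : k ≤ Fintype.card α) :
    ∃ H : Finset (Finset α), IsUniversalFamily k H ∧
      #H ≤ 2 ^ k * (k * (Nat.log 2 (Fintype.card α) + 2)) := by
  set n := Fintype.card α
  set m := 2 ^ k * (k * (Nat.log 2 n + 2))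
  let R : Finset (Σ _ : Finset α, Finset α) := (powersetCard k univ).sigma powerset
  have hR : #R ≤ (2 * n) ^ k := by
    have hsum : #R = n.choose k * 2 ^ k := by
      rw [card_sigma, sum_congr rfl fun S hS => by rw [card_powerset, (mem_powersetCard.mp hS).2],
        sum_const, card_powersetCard, card_univ, smul_eq_mul]
    rw [hsum, mul_pow, mul_comm]
    exact Nat.mul_le_mul_left _ (Nat.choose_le_pow n k)
  have hgood : ∀ p ∈ R, 2 ^ (n - k) ≤ #{A : Finset α | p.1 ∩ A = p.2} := fun p hp => by
    obtain ⟨hS, hS'⟩ := mem_sigma.mp hp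
    rw [← (mem_powersetCard.mp hS).2]
    exact two_pow_card_sub_le_card_filter_inter_eq (mem_powerset.mp hS')
  have hsplit : 2 ^ n = 2 ^ (n - k) * 2 ^ k := by rw [← pow_add, Nat.sub_add_cancel hkn]
  have hcount : #R * (Fintype.card (Finset α) - 2 ^ (n - k)) ^ m < Fintype.card (Finset α) ^ m :=
    calc #R * (Fintype.card (Finset α) - 2 ^ (n - k)) ^ m
        = (2 ^ (n - k)) ^ m * (#R * (2 ^ k - 1) ^ m) := by
          rw [Fintype.card_finset, hsplit, ← Nat.mul_sub_one, mul_pow]; ring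
      _ < (2 ^ (n - k)) ^ m * (2 ^ k) ^ m := Nat.mul_lt_mul_of_pos_left
          ((Nat.mul_le_mul_right _ hR).trans_lt (pow_mul_two_pow_sub_one_pow_lt n hk))
          (by positivity)
      _ = Fintype.card (Finset α) ^ m := by rw [Fintype.card_finset, hsplit, mul_pow]
  obtain ⟨f, hf⟩ := exists_forall_exists_mem_of_card_mul_pow_lt R _ hgood hcount
  refine ⟨univ.image f, isUniversalFamily_of_card_eq hkn fun S hS S' hS' => ?_, ?_⟩
  · obtain ⟨i, hi⟩ := hf ⟨S, S'⟩ (mem_sigma.mpr ⟨mem_powersetCard.mpr ⟨subset_univ S, hS⟩,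
      mem_powerset.mpr hS'⟩)
    exact ⟨f i, mem_image_of_mem f (mem_univ i), (mem_filter.mp hi).2⟩
  · exact card_image_le.trans (by simp)

/-- For all positive `n, k` there is an `(n,k)`-universal set of size at most
`2^k · k^{O(log k)} · log n`. -/
theorem stmt17 : ∃ C : ℕ, ∀ n k : ℕ, 0 < n → 0 < k →
    ∃ H : Finset (Finset (Fin n)),
      (∀ S : Finset (Fin n), S.card ≤ k → ∀ S' ⊆ S, ∃ A ∈ H, S ∩ A = S') ∧
      H.card ≤ 2 ^ k * k ^ (C * (Nat.log 2 k + 1)) * (Nat.log 2 n + 1) := by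
  refine ⟨1, fun n k _ hk => ?_⟩
  rcases le_or_gt n k with hnk | hkn
  · refine ⟨univ.powerset, isUniversalFamily_powerset k, ?_⟩
    rw [card_powerset, card_univ, Fintype.card_fin, mul_assoc]
    exact (Nat.pow_le_pow_right two_pos hnk).trans (Nat.le_mul_of_pos_right _ (by positivity))
  rcases Nat.lt_or_ge k 2 with hk1 | hk2
  · obtain rfl : k = 1 := by omega
    exact ⟨{∅, univ}, isUniversalFamily_one, card_le_two.trans (by simp)⟩
  obtain ⟨H, hH, hcard⟩ :=
    exists_isUniversalFamily_card_le (α := Fin n) hk (by rw [Fintype.card_fin]; exact hkn.le)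
  rw [Fintype.card_fin] at hcard
  have hlog : 1 ≤ Nat.log 2 k := Nat.le_log_of_pow_le one_lt_two hk2
  have hk_sq : k * 2 ≤ k ^ (1 * (Nat.log 2 k + 1)) :=
    calc k * 2 ≤ k ^ 2 := by rw [sq]; exact Nat.mul_le_mul_left k hk2
      _ ≤ k ^ (1 * (Nat.log 2 k + 1)) := Nat.pow_le_pow_right hk (by omega)
  refine ⟨H, hH, hcard.trans ?_⟩
  rw [mul_assoc]
  refine Nat.mul_le_mul_left _ ?_
  calc k * (Nat.log 2 n + 2) ≤ k * 2 * (Nat.log 2 n + 1) := by nlinarith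
    _ ≤ _ := Nat.mul_le_mul_right _ hk_sq
end
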